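/- Quantized factors identifiability theorem: Let μ be a probability measure on ℝ^d, absolutely continuous with respect to Lebesgue measure, let S ⊆ ℝ^d be an open connected set with μ(ℝ^d \ S) = 0, and suppose that the set of points of S at which μ has a non-removable discontinuity equals grid_S(A) for a discrete coordination A on S (with at least one threshold along each axis) whose axis-separator set 𝒢(A) has a backbone. Let h : S → S' be any smooth diffeomorphism onto an open set S' ⊆ ℝ^d (h plays the role of the composition g ∘ f of the mixing map with a learned inverse map), let ν be the pushforward of μ under h, and suppose that the set of points of S' at which ν has a non-removable discontinuity equals grid_{S'}(B) for some discrete coordination B on S'. Then there exist a permutation σ of {1,…,d} and a sign vector s ∈ {−1,+1}^d such that for every i ∈ {1,…,d}, with j = σ(i), and every z ∈ S: Q(z_i; A_i) = Q^{s_i}((h z)_j; B_j); that is, the quantized recovered factors agree with the quantized ground-truth factors up to permutation of indices and possible axis reversal. -/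

import Mathlib

open Set MeasureTheory Topology

noncomputable section

abbrev Euc (d : ℕ) := EuclideanSpace ℝ (Fin d)

/-- Axis separator: points of `S` whose `i`-th coordinate equals `τ`. -/
def Gamma {d : ℕ} (S : Set (Euc d)) (i : Fin d) (τ : ℝ) : Set (Euc d) :=
  {z | z ∈ S ∧ z i = τ}

/-- Positive half: points of `S` whose `i`-th coordinate is greater than `τ`. -/
def GammaPos {d : ℕ} (S : Set (Euc d)) (i : Fin d) (τ : ℝ) : Set (Euc d) :=
  {z | z ∈ S ∧ τ < z i}

/-- Negative half: points of `S` whose `i`-th coordinate is less than `τ`. -/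
def GammaNeg {d : ℕ} (S : Set (Euc d)) (i : Fin d) (τ : ℝ) : Set (Euc d) :=
  {z | z ∈ S ∧ z i < τ}

/-- `Γ_S(i,τ)` is an axis-separator of `S`: it is nonempty and connected, and both of
its halves are nonempty and connected. (`IsConnected` includes nonemptiness.) -/
def IsAxisSeparator {d : ℕ} (S : Set (Euc d)) (i : Fin d) (τ : ℝ) : Prop :=
  IsConnected (Gamma S i τ) ∧ IsConnected (GammaPos S i τ) ∧ IsConnected (GammaNeg S i τ)

/-- A smooth diffeomorphism from `S` onto `S'` with explicit inverse `hinv`. -/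
structure IsSmoothDiffeoOn {d : ℕ} (h hinv : Euc d → Euc d) (S S' : Set (Euc d)) : Prop where
  mapsTo : Set.MapsTo h S S'
  mapsTo_inv : Set.MapsTo hinv S' S
  left_inv : ∀ z ∈ S, hinv (h z) = z
  right_inv : ∀ z' ∈ S', h (hinv z') = z'
  smooth : ContDiffOn ℝ (⊤ : ℕ∞) h S
  smooth_inv : ContDiffOn ℝ (⊤ : ℕ∞) hinv S'

/-- A discrete coordination on `S`: for each axis `i`, a strictly increasing nonempty tuple
of thresholds, each giving an axis-separator of `S`. -/
structure DiscreteCoordination {d : ℕ} (S : Set (Euc d)) where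
  n : Fin d → ℕ
  n_pos : ∀ i, 0 < n i
  A : (i : Fin d) → Fin (n i) → ℝ
  mono : ∀ i, StrictMono (A i)
  sep : ∀ i k, IsAxisSeparator S i (A i k)

/-- The grid of a discrete coordination: the union of all its axis-separators. -/
def DiscreteCoordination.grid {d : ℕ} {S : Set (Euc d)} (C : DiscreteCoordination S) :
    Set (Euc d) :=
  ⋃ (i : Fin d), ⋃ (k : Fin (C.n i)), Gamma S i (C.A i k)

/-- The parallel-separator-set along axis `i`. -/
def DiscreteCoordination.axisSet {d : ℕ} {S : Set (Euc d)} (C : DiscreteCoordination S)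
    (i : Fin d) : Set (Set (Euc d)) :=
  {H | ∃ k : Fin (C.n i), H = Gamma S i (C.A i k)}

/-- The axis-separator set of a discrete coordination. -/
def DiscreteCoordination.sepSet {d : ℕ} {S : Set (Euc d)} (C : DiscreteCoordination S) :
    Set (Set (Euc d)) :=
  {H | ∃ (i : Fin d) (k : Fin (C.n i)), H = Gamma S i (C.A i k)}

/-- A backbone: a choice of one separator per axis such that they all meet in a single
point and each of them meets every separator of the grid lying on a different axis. -/
def DiscreteCoordination.HasBackbone {d : ℕ} {S : Set (Euc d)}
    (C : DiscreteCoordination S) : Prop :=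
  ∃ kstar : (i : Fin d) → Fin (C.n i),
    (∃ z : Euc d, (⋂ (i : Fin d), Gamma S i (C.A i (kstar i))) = {z}) ∧
    ∀ (i j : Fin d), j ≠ i → ∀ k : Fin (C.n j),
      (Gamma S i (C.A i (kstar i)) ∩ Gamma S j (C.A j k)).Nonempty

/-- Quantization: `Q(x;T) = Σ_k 1[x ≥ T_k]`. -/
def Q {K : ℕ} (x : ℝ) (T : Fin K → ℝ) : ℕ :=
  (Finset.univ.filter fun k : Fin K => T k ≤ x).card

/-- Quantization with order reversal: `Q⁻(x;T) = Σ_k 1[x ≤ T_k]`. -/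
def Qneg {K : ℕ} (x : ℝ) (T : Fin K → ℝ) : ℕ :=
  (Finset.univ.filter fun k : Fin K => x ≤ T k).card

/-- Signed quantization: `Q^{+1} = Q` and `Q^{-1} = Q⁻`. -/
def Qsgn {K : ℕ} (s : ℤ) (x : ℝ) (T : Fin K → ℝ) : ℕ :=
  if s = 1 then Q x T else Qneg x T

/-- `μ` (absolutely continuous w.r.t. Lebesgue) has a non-removable discontinuity at `z`
if every measurable density of `μ` w.r.t. Lebesgue measure is discontinuous at `z`. -/
def HasNonRemovableDiscont {d : ℕ} (μ : Measure (Euc d)) (z : Euc d) : Prop :=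
  ∀ q : Euc d → ENNReal, Measurable q → μ = volume.withDensity q → ¬ ContinuousAt q z

/-- `T` has exactly two connected components, namely `Cp` and `Cm`. -/
def TwoComponents {d : ℕ} (T Cp Cm : Set (Euc d)) : Prop :=
  Cp ≠ Cm ∧
  (∃ x ∈ T, connectedComponentIn T x = Cp) ∧
  (∃ x ∈ T, connectedComponentIn T x = Cm) ∧
  ∀ x ∈ T, connectedComponentIn T x = Cp ∨ connectedComponentIn T x = Cm

/-- The intersection set of a finite family of separators: points lying on at least two
distinct members. -/
def interSet {d M : ℕ} (H : Fin M → Set (Euc d)) : Set (Euc d) :=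
  ⋃ (m : Fin M), ⋃ (m' : Fin M), ⋃ (_ : m ≠ m'), H m ∩ H m'

/-!
Densities transfer through `h` by the change of variables formula with the nonvanishing Jacobian
`|det Dh|`, so `h` maps the non-removable discontinuities of `μ` exactly onto those of `ν`, i.e.
`grid_S(A)` onto `grid_{S'}(B)`. Near every point of a separator `Γ_S(i, τ)` one coordinate of `h`
is then constant on the separator (Baire category, and `Dh` is invertible, so at most one of its
rows vanishes on the hyperplane `{v_i = 0}`); by connectedness the same coordinate is constant on
the whole separator, and the image is a full separator of `B` since it must disconnect `S'`. The
backbone makes all separators of axis `i` land on one axis `σ i`, and the connected halves give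
each separator an orientation, which is the same along an axis; counting thresholds below a point
then yields the equality of quantizations.
-/

open Filter

section Topology

lemma exists_mem_nhds_of_iUnion_eq_univ {Y ι : Type*} [TopologicalSpace Y] [BaireSpace Y]
    [Finite ι] {F : ι → Set Y} (hF : ∀ m, IsClosed (F m)) (hcover : ⋃ m, F m = univ) {p : Y}
    (huniq : ∀ m m', p ∈ closure (interior (F m)) → p ∈ closure (interior (F m')) → m = m') :
    ∃ m, F m ∈ 𝓝 p := by
  set D := {m | p ∈ closure (interior (F m))}
  set N := ⋂ m ∈ Dᶜ, (closure (interior (F m)))ᶜ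
  have hN : N ∈ 𝓝 p :=
    (biInter_mem (toFinite _)).2 fun m hm => isClosed_closure.isOpen_compl.mem_nhds hm
  have hsub : interior N ⊆ ⋃ m ∈ D, F m := by
    refine ((dense_iUnion_interior_of_closed hF hcover).open_subset_closure_inter
      isOpen_interior).trans (closure_minimal ?_ ((toFinite D).isClosed_biUnion fun m _ => hF m))
    rintro y ⟨hyN, hy⟩
    obtain ⟨m, hm⟩ := mem_iUnion.1 hy
    refine mem_biUnion (x := m) ?_ (interior_subset hm)
    by_contra hmD
    exact mem_iInter₂.1 (interior_subset hyN) m hmD (subset_closure hm)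
  obtain ⟨m, hmD, -⟩ := mem_iUnion₂.1 (hsub (mem_interior_iff_mem_nhds.2 hN))
  refine ⟨m, mem_of_superset (interior_mem_nhds.2 hN) 
    (hsub.trans (iUnion₂_subset fun m' hm' => ?_))⟩
  rw [huniq m' m hm' hmD]

lemma IsConnected.exists_forall_of_eventually {X ι : Type*} [TopologicalSpace X] {s : Set X}
    (hs : IsConnected s) {P : ι → X → Prop} (hex : ∀ x ∈ s, ∃ m, ∀ᶠ y in 𝓝[s] x, P m y)
    (huniq : ∀ x ∈ s, ∀ m m', (∀ᶠ y in 𝓝[s] x, P m y) → (∀ᶠ y in 𝓝[s] x, P m' y) → m = m') :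
    ∃ m, ∀ x ∈ s, P m x := by
  choose g hg using hex
  have : PreconnectedSpace s := isPreconnected_iff_preconnectedSpace.1 hs.isPreconnected
  have hloc : IsLocallyConstant fun x : s => g x x.2 := by
    refine (IsLocallyConstant.iff_eventually_eq _).2 fun x => ?_
    filter_upwards [(eventually_nhds_subtype_iff s x _).2
      (eventually_eventually_nhdsWithin.2 (hg x x.2))] with y hy
    exact huniq y y.2 _ _ (hg y y.2) hy
  obtain ⟨x₀, hx₀⟩ := hs.nonempty
  refine ⟨g x₀ hx₀, fun x hx => ?_⟩
  rw [hloc.apply_eq_of_preconnectedSpace ⟨x₀, hx₀⟩ ⟨x, hx⟩]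
  exact (hg x hx).self_of_nhdsWithin hx

lemma IsPreconnected.forall_lt_or_forall_gt {X : Type*} [TopologicalSpace X] {s : Set X}
    (hs : IsPreconnected s) {f : X → ℝ} (hf : ContinuousOn f s) {c : ℝ}
    (hc : ∀ x ∈ s, f x ≠ c) : (∀ x ∈ s, f x < c) ∨ (∀ x ∈ s, c < f x) := by
  by_contra! ⟨⟨a, ha, hca⟩, ⟨b, hb, hbc⟩⟩
  obtain ⟨x, hx, hfx⟩ := hs.intermediate_value₂ hb ha hf continuousOn_const hbc hca
  exact hc x hx hfx

end Topology

section Orientation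

variable {X : Type*} {s : Set X} {a b : X → ℝ}

lemma le_iff_le_or_le_iff_ge [TopologicalSpace X] {τ τ' : ℝ} (hb : ContinuousOn b s)
    (hpos : IsPreconnected {x | x ∈ s ∧ τ < a x}) (hneg : IsPreconnected {x | x ∈ s ∧ a x < τ})
    (hab : ∀ x ∈ s, a x = τ ↔ b x = τ') (hlt : ∃ x ∈ s, b x < τ') (hgt : ∃ x ∈ s, τ' < b x) :
    (∀ x ∈ s, τ ≤ a x ↔ τ' ≤ b x) ∨ (∀ x ∈ s, τ ≤ a x ↔ b x ≤ τ') := by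
  have hne : ∀ x ∈ s, a x ≠ τ → b x ≠ τ' := fun x hx h₁ h₂ => h₁ ((hab x hx).2 h₂)
  have hcases : ∀ x ∈ s, a x < τ ∨ (a x = τ ∧ b x = τ') ∨ τ < a x := fun x hx =>
    (lt_trichotomy (a x) τ).imp_right (Or.imp_left fun h => ⟨h, (hab x hx).1 h⟩)
  rcases hpos.forall_lt_or_forall_gt (hb.mono fun x hx => hx.1)
    (fun x hx => hne x hx.1 hx.2.ne') with hP | hP <;>
  rcases hneg.forall_lt_or_forall_gt (hb.mono fun x hx => hx.1)
    (fun x hx => hne x hx.1 hx.2.ne) with hN | hN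
  · obtain ⟨x, hx, hbx⟩ := hgt
    rcases hcases x hx with h | ⟨-, h⟩ | h
    exacts [absurd (hN x ⟨hx, h⟩) hbx.not_gt, absurd h hbx.ne', absurd (hP x ⟨hx, h⟩) hbx.not_gt]
  · refine Or.inr fun x hx => ?_
    rcases hcases x hx with h | ⟨h, h'⟩ | h
    · exact iff_of_false h.not_ge (hN x ⟨hx, h⟩).not_ge
    · exact iff_of_true h.ge h'.le
    · exact iff_of_true h.le (hP x ⟨hx, h⟩).le
  · refine Or.inl fun x hx => ?_
    rcases hcases x hx with h | ⟨h, h'⟩ | h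
    · exact iff_of_false h.not_ge (hN x ⟨hx, h⟩).not_ge
    · exact iff_of_true h.ge h'.ge
    · exact iff_of_true h.le (hP x ⟨hx, h⟩).le
  · obtain ⟨x, hx, hbx⟩ := hlt
    rcases hcases x hx with h | ⟨-, h⟩ | h
    exacts [absurd (hN x ⟨hx, h⟩) hbx.not_gt, absurd h hbx.ne, absurd (hP x ⟨hx, h⟩) hbx.not_gt]

lemma false_of_le_iff_le_of_le_iff_ge {τ₁ τ₂ τ₁' τ₂' : ℝ}
    (h₁ : ∀ x ∈ s, τ₁ ≤ a x ↔ τ₁' ≤ b x) (h₂ : ∀ x ∈ s, τ₂ ≤ a x ↔ b x ≤ τ₂')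
    {x₁ x₂ w : X} (hx₁ : x₁ ∈ s) (ha₁ : a x₁ = τ₁) (hb₁ : b x₁ = τ₁') (hx₂ : x₂ ∈ s)
    (ha₂ : a x₂ = τ₂) (hb₂ : b x₂ = τ₂') (hw : w ∈ s) (haw : a w < τ₁) : False := by
  rcases le_or_gt τ₁ τ₂ with h | h
  · have e₁ : τ₁' ≤ τ₂' := hb₂ ▸ (h₁ x₂ hx₂).1 (ha₂ ▸ h)
    have e₂ : b w < τ₁' := not_le.1 fun h' => haw.not_ge ((h₁ w hw).2 h')
    have e₃ : τ₂' < b w := not_le.1 fun h' => (haw.trans_le h).not_ge ((h₂ w hw).2 h')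
    linarith
  · have e₁ : τ₁' ≤ τ₂' := hb₁ ▸ (h₂ x₁ hx₁).1 (ha₁ ▸ h.le)
    have e₂ : τ₂' < τ₁' := hb₂ ▸ not_le.1 fun h' => (ha₂ ▸ h).not_ge ((h₁ x₂ hx₂).2 h')
    linarith

end Orientation

lemma Q_eq_Q_of_bijective {n m : ℕ} {T : Fin n → ℝ} {T' : Fin m → ℝ} {x y : ℝ}
    {f : Fin n → Fin m} (hf : Function.Bijective f) (h : ∀ k, T k ≤ x ↔ T' (f k) ≤ y) :
    Q x T = Q y T' :=
  Finset.card_equiv (Equiv.ofBijective f hf) (by simp [h])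

lemma Q_eq_Qneg_of_bijective {n m : ℕ} {T : Fin n → ℝ} {T' : Fin m → ℝ} {x y : ℝ}
    {f : Fin n → Fin m} (hf : Function.Bijective f) (h : ∀ k, T k ≤ x ↔ y ≤ T' (f k)) :
    Q x T = Qneg y T' :=
  Finset.card_equiv (Equiv.ofBijective f hf) (by simp [h])

section Coordinates

variable {d : ℕ} {S : Set (Euc d)}

lemma tendsto_add_smul (z v : Euc d) : Tendsto (fun t : ℝ => z + t • v) (𝓝 0) (𝓝 z) :=
  (by fun_prop : Continuous fun t : ℝ => z + t • v).tendsto' 0 z (by simp)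

lemma eventually_add_smul_mem (hS : IsOpen S) {z : Euc d} (hz : z ∈ S) (v : Euc d) :
    ∀ᶠ t in 𝓝 (0 : ℝ), z + t • v ∈ S :=
  tendsto_add_smul z v (hS.mem_nhds hz)

lemma isOpen_gammaPos (hS : IsOpen S) (i : Fin d) (τ : ℝ) : IsOpen (GammaPos S i τ) :=
  hS.inter (isOpen_lt continuous_const (by fun_prop : Continuous fun z : Euc d => z i))

lemma isOpen_gammaNeg (hS : IsOpen S) (i : Fin d) (τ : ℝ) : IsOpen (GammaNeg S i τ) :=
  hS.inter (isOpen_lt (by fun_prop : Continuous fun z : Euc d => z i) continuous_const)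

lemma isGδ_gamma (hS : IsOpen S) (i : Fin d) (τ : ℝ) : IsGδ (Gamma S i τ) :=
  hS.isGδ.inter (isClosed_eq (by fun_prop) continuous_const).isGδ

lemma gamma_subset_closure_gammaPos (hS : IsOpen S) (i : Fin d) (τ : ℝ) :
    Gamma S i τ ⊆ closure (GammaPos S i τ) := by
  intro z hz
  have hlim := (tendsto_add_smul z (EuclideanSpace.single i 1)).mono_left
    (nhdsWithin_le_nhds (s := Ioi 0))
  refine mem_closure_of_tendsto hlim ?_
  filter_upwards [hlim (hS.mem_nhds hz.1), self_mem_nhdsWithin] with t ht (htpos : 0 < t)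
  exact ⟨ht, by simp [hz.2, htpos]⟩

lemma gamma_subset_closure_gammaNeg (hS : IsOpen S) (i : Fin d) (τ : ℝ) :
    Gamma S i τ ⊆ closure (GammaNeg S i τ) := by
  intro z hz
  have hlim := (tendsto_add_smul z (EuclideanSpace.single i 1)).mono_left
    (nhdsWithin_le_nhds (s := Iio 0))
  refine mem_closure_of_tendsto hlim ?_
  filter_upwards [hlim (hS.mem_nhds hz.1), self_mem_nhdsWithin] with t ht (htneg : t < 0)
  exact ⟨ht, by simp [hz.2, htneg]⟩

lemma eq_and_eq_of_forall_mem_iff (hS : IsOpen S) {z : Euc d} (hz : z ∈ S) {i i' : Fin d}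
    {τ τ' : ℝ} (hzi : z i = τ) (hiff : ∀ w ∈ S, w i = τ ↔ w i' = τ') : i = i' ∧ τ = τ' := by
  have hzi' : z i' = τ' := (hiff z hz).1 hzi
  obtain rfl : i = i' := by
    by_contra hne
    obtain ⟨t, ht, ht0⟩ := ((eventually_add_smul_mem hS hz (EuclideanSpace.single i' 1)).filter_mono
      nhdsWithin_le_nhds |>.and (self_mem_nhdsWithin (s := {0}ᶜ))).exists
    have := (hiff _ ht).1 (by simp [hzi, hne])
    simp [hzi'] at this
    exact ht0 this
  exact ⟨rfl, hzi ▸ hzi'⟩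

lemma not_isPreconnected_diff_gamma (hS : IsOpen S) {i : Fin d} {τ : ℝ}
    (hsep : IsAxisSeparator S i τ) : ¬ IsPreconnected (S \ Gamma S i τ) := by
  intro hpre
  have hdisj : Disjoint (GammaPos S i τ) (GammaNeg S i τ) :=
    Set.disjoint_left.2 fun _ h₁ h₂ => lt_asymm h₁.2 h₂.2
  have hsplit : S \ Gamma S i τ ⊆ GammaPos S i τ ∪ GammaNeg S i τ := fun z ⟨hz, hzΓ⟩ =>
    (lt_or_gt_of_ne fun h => hzΓ ⟨hz, h⟩).symm.imp (And.intro hz) (And.intro hz)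
  obtain ⟨zp, hzp⟩ := hsep.2.1.nonempty
  obtain ⟨zn, hzn⟩ := hsep.2.2.nonempty
  rcases hpre.subset_or_subset (isOpen_gammaPos hS i τ) (isOpen_gammaNeg hS i τ) hdisj hsplit
    with hsub | hsub
  · exact hdisj.le_bot ⟨hsub ⟨hzn.1, fun h => hzn.2.ne h.2⟩, hzn⟩
  · exact hdisj.le_bot ⟨hzp, hsub ⟨hzp.1, fun h => hzp.2.ne' h.2⟩⟩

end Coordinates

namespace IsSmoothDiffeoOn

variable {d : ℕ} {h hinv : Euc d → Euc d} {S S' : Set (Euc d)}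

lemma symm (hd : IsSmoothDiffeoOn h hinv S S') : IsSmoothDiffeoOn hinv h S' S :=
  ⟨hd.mapsTo_inv, hd.mapsTo, hd.right_inv, hd.left_inv, hd.smooth_inv, hd.smooth⟩

lemma injOn (hd : IsSmoothDiffeoOn h hinv S S') : InjOn h S :=
  fun a ha b hb hab => by rw [← hd.left_inv a ha, ← hd.left_inv b hb, hab]

lemma hasFDerivAt (hd : IsSmoothDiffeoOn h hinv S S') (hS : IsOpen S) {z : Euc d} (hz : z ∈ S) :
    HasFDerivAt h (fderiv ℝ h z) z :=
  ((hd.smooth.contDiffAt (hS.mem_nhds hz)).differentiableAt (by simp)).hasFDerivAt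

lemma continuousOn_fderiv (hd : IsSmoothDiffeoOn h hinv S S') (hS : IsOpen S) :
    ContinuousOn (fderiv ℝ h) S :=
  hd.smooth.continuousOn_fderiv_of_isOpen hS (by simp)

lemma fderiv_comp_fderiv_inv (hd : IsSmoothDiffeoOn h hinv S S') (hS : IsOpen S)
    (hS' : IsOpen S') {z : Euc d} (hz : z ∈ S) :
    (fderiv ℝ h z).comp (fderiv ℝ hinv (h z)) = ContinuousLinearMap.id ℝ (Euc d) := by
  have hcomp : HasFDerivAt (h ∘ hinv) ((fderiv ℝ h z).comp (fderiv ℝ hinv (h z))) (h z) := by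
    have hh : HasFDerivAt h (fderiv ℝ h z) (hinv (h z)) := by
      rw [hd.left_inv z hz]
      exact hd.hasFDerivAt hS hz
    exact hh.comp (h z) (hd.symm.hasFDerivAt hS' (hd.mapsTo hz))
  have hid : h ∘ hinv =ᶠ[𝓝 (h z)] id := by
    filter_upwards [hS'.mem_nhds (hd.mapsTo hz)] with y hy using hd.right_inv y hy
  exact hcomp.unique ((hasFDerivAt_id _).congr_of_eventuallyEq hid)

lemma surjective_fderiv (hd : IsSmoothDiffeoOn h hinv S S') (hS : IsOpen S) (hS' : IsOpen S')
    {z : Euc d} (hz : z ∈ S) : Function.Surjective (fderiv ℝ h z) := fun y =>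
  ⟨fderiv ℝ hinv (h z) y, by
    simpa using congrArg (· y) (hd.fderiv_comp_fderiv_inv hS hS' hz)⟩

lemma det_fderiv_ne_zero (hd : IsSmoothDiffeoOn h hinv S S') (hS : IsOpen S) (hS' : IsOpen S')
    {z : Euc d} (hz : z ∈ S) : (fderiv ℝ h z).det ≠ 0 := by
  have hdet : (fderiv ℝ h z).det * (fderiv ℝ hinv (h z)).det = 1 := by
    simpa [ContinuousLinearMap.det] using
      congrArg ContinuousLinearMap.det (hd.fderiv_comp_fderiv_inv hS hS' hz)
  exact left_ne_zero_of_mul_eq_one hdet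

variable {μ : Measure (Euc d)}

lemma aemeasurable (hd : IsSmoothDiffeoOn h hinv S S') (hS : IsOpen S) (hμ : μ.restrict S = μ) :
    AEMeasurable h μ :=
  hμ ▸ hd.smooth.continuousOn.aemeasurable hS.measurableSet

lemma restrict_map (hd : IsSmoothDiffeoOn h hinv S S') (hS : IsOpen S) (hS' : IsOpen S')
    (hμ : μ.restrict S = μ) : (μ.map h).restrict S' = μ.map h := by
  refine Measure.restrict_eq_self_of_ae_mem ((ae_map_iff (hd.aemeasurable hS hμ)
    hS'.measurableSet).2 ?_)
  rw [← hμ]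
  filter_upwards [ae_restrict_mem hS.measurableSet] with x hx using hd.mapsTo hx

lemma map_inv_map (hd : IsSmoothDiffeoOn h hinv S S') (hS : IsOpen S) (hS' : IsOpen S')
    (hμ : μ.restrict S = μ) : (μ.map h).map hinv = μ := by
  rw [AEMeasurable.map_map_of_aemeasurable
    (hd.symm.aemeasurable hS' (hd.restrict_map hS hS' hμ)) (hd.aemeasurable hS hμ)]
  conv_rhs => rw [← Measure.map_id (μ := μ)]
  refine Measure.map_congr ?_
  rw [← hμ]
  filter_upwards [ae_restrict_mem hS.measurableSet] with x hx using hd.left_inv x hx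

def pullbackDensity (h : Euc d → Euc d) (S : Set (Euc d)) (q' : Euc d → ENNReal) :
    Euc d → ENNReal :=
  S.indicator fun x => ENNReal.ofReal |(fderiv ℝ h x).det| * q' (h x)

lemma measurable_pullbackDensity (hd : IsSmoothDiffeoOn h hinv S S') (hS : IsOpen S)
    {q' : Euc d → ENNReal} (hq' : Measurable q') : Measurable (pullbackDensity h S q') := by
  classical
  have hJ : Measurable fun x => ENNReal.ofReal |(fderiv ℝ h x).det| :=
    ENNReal.measurable_ofReal.comp (continuous_abs.measurable.comp
      (ContinuousLinearMap.continuous_det.measurable.comp (measurable_fderiv ℝ h)))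
  have hh : Measurable (S.piecewise h id) :=
    hd.smooth.continuousOn.measurable_piecewise continuousOn_id hS.measurableSet
  have heq : pullbackDensity h S q' =
      S.indicator fun x => ENNReal.ofReal |(fderiv ℝ h x).det| * q' (S.piecewise h id x) :=
    indicator_congr fun x hx => by rw [piecewise_eq_of_mem _ _ _ hx]
  rw [heq]
  exact (hJ.mul (hq'.comp hh)).indicator hS.measurableSet

lemma withDensity_pullbackDensity (hd : IsSmoothDiffeoOn h hinv S S') (hS : IsOpen S)
    (hμ : μ.restrict S = μ) {q' : Euc d → ENNReal} (hq' : μ.map h = volume.withDensity q') :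
    volume.withDensity (pullbackDensity h S q') = μ := by
  ext E hE
  have hSE : MeasurableSet (S ∩ E) := hS.measurableSet.inter hE
  have hderiv : ∀ x ∈ S ∩ E, HasFDerivWithinAt h (fderiv ℝ h x) (S ∩ E) x :=
    fun x hx => (hd.hasFDerivAt hS hx.1).hasFDerivWithinAt
  have hinj : InjOn h (S ∩ E) := hd.injOn.mono inter_subset_left
  have himg : MeasurableSet (h '' (S ∩ E)) := measurable_image_of_fderivWithin hSE hderiv hinj
  have hpre : h ⁻¹' (h '' (S ∩ E)) ∩ S = E ∩ S := by
    ext x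
    refine ⟨fun ⟨⟨y, hy, hyx⟩, hx⟩ => ⟨hd.injOn hy.1 hx hyx ▸ hy.2, hx⟩, fun ⟨hxE, hx⟩ =>
      ⟨⟨x, ⟨hx, hxE⟩, rfl⟩, hx⟩⟩
  calc volume.withDensity (pullbackDensity h S q') E
      = ∫⁻ x in S ∩ E, ENNReal.ofReal |(fderiv ℝ h x).det| * q' (h x) := by
        rw [withDensity_apply _ hE, pullbackDensity, lintegral_indicator hS.measurableSet,
          Measure.restrict_restrict hS.measurableSet]
    _ = μ.map h (h '' (S ∩ E)) := by
        rw [hq', withDensity_apply _ himg,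
          lintegral_image_eq_lintegral_abs_det_fderiv_mul volume hSE hderiv hinj]
    _ = μ E := by
        rw [Measure.map_apply_of_aemeasurable (hd.aemeasurable hS hμ) himg, ← hμ,
          Measure.restrict_apply' hS.measurableSet, Measure.restrict_apply' hS.measurableSet, hpre]

lemma continuousAt_pullbackDensity (hd : IsSmoothDiffeoOn h hinv S S') (hS : IsOpen S)
    (hS' : IsOpen S') {q' : Euc d → ENNReal} {z : Euc d} (hz : z ∈ S)
    (hq' : ContinuousAt q' (h z)) : ContinuousAt (pullbackDensity h S q') z := by
  have hJ : ContinuousAt (fun x => ENNReal.ofReal |(fderiv ℝ h x).det|) z :=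
    ENNReal.continuous_ofReal.continuousAt.comp (continuous_abs.continuousAt.comp
      (ContinuousLinearMap.continuous_det.continuousAt.comp
        ((hd.continuousOn_fderiv hS).continuousAt (hS.mem_nhds hz))))
  have hJ0 : ENNReal.ofReal |(fderiv ℝ h z).det| ≠ 0 := by
    simpa using hd.det_fderiv_ne_zero hS hS' hz
  have hq'h : ContinuousAt (fun x => q' (h x)) z :=
    hq'.comp (hd.smooth.continuousOn.continuousAt (hS.mem_nhds hz))
  have hprod : ContinuousAt (fun x => ENNReal.ofReal |(fderiv ℝ h x).det| * q' (h x)) z :=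
    ENNReal.Tendsto.mul hJ (Or.inl hJ0) hq'h (Or.inr ENNReal.ofReal_ne_top)
  refine hprod.congr ?_
  filter_upwards [hS.mem_nhds hz] with x hx
  exact (indicator_of_mem hx (fun x => ENNReal.ofReal |(fderiv ℝ h x).det| * q' (h x))).symm

lemma hasNonRemovableDiscont_map (hd : IsSmoothDiffeoOn h hinv S S') (hS : IsOpen S)
    (hS' : IsOpen S') (hμ : μ.restrict S = μ) {z : Euc d} (hz : z ∈ S)
    (hdisc : HasNonRemovableDiscont μ z) : HasNonRemovableDiscont (μ.map h) (h z) :=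
  fun _ hq'm hq' hcont => hdisc _ (hd.measurable_pullbackDensity hS hq'm)
    (hd.withDensity_pullbackDensity hS hμ hq').symm
    (hd.continuousAt_pullbackDensity hS hS' hz hcont)

lemma hasNonRemovableDiscont_map_iff (hd : IsSmoothDiffeoOn h hinv S S') (hS : IsOpen S)
    (hS' : IsOpen S') (hμ : μ.restrict S = μ) {z : Euc d} (hz : z ∈ S) :
    HasNonRemovableDiscont (μ.map h) (h z) ↔ HasNonRemovableDiscont μ z := by
  refine ⟨fun hdisc => ?_, hd.hasNonRemovableDiscont_map hS hS' hμ hz⟩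
  simpa [hd.map_inv_map hS hS' hμ, hd.left_inv z hz] using
    hd.symm.hasNonRemovableDiscont_map hS' hS (hd.restrict_map hS hS' hμ) (hd.mapsTo hz) hdisc

end IsSmoothDiffeoOn

section SliceDerivative

variable {d : ℕ} {S : Set (Euc d)} {i j : Fin d} {τ : ℝ}

lemma fderiv_apply_eq_zero_of_eventually_eq (hS : IsOpen S) {f : Euc d → Euc d} {z : Euc d}
    (hz : z ∈ Gamma S i τ) (hf : DifferentiableAt ℝ f z) {c : ℝ}
    (hc : ∀ᶠ w in 𝓝[Gamma S i τ] z, f w j = c) {v : Euc d} (hv : v i = 0) :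
    fderiv ℝ f z v j = 0 := by
  have hγ : Tendsto (fun t : ℝ => z + t • v) (𝓝 0) (𝓝[Gamma S i τ] z) :=
    tendsto_nhdsWithin_iff.2 ⟨tendsto_add_smul z v,
      (eventually_add_smul_mem hS hz.1 v).mono fun t ht => ⟨ht, by simp [hz.2, hv]⟩⟩
  have hline : HasDerivAt (fun t : ℝ => z + t • v) v 0 := by
    simpa using ((hasDerivAt_id (0 : ℝ)).smul_const v).const_add z
  have hcomp : HasDerivAt (fun t : ℝ => f (z + t • v) j) (fderiv ℝ f z v j) 0 :=
    (EuclideanSpace.proj j : Euc d →L[ℝ] ℝ).hasFDerivAt.comp_hasDerivAt 0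
      (hf.hasFDerivAt.comp_hasDerivAt_of_eq 0 hline (by simp))
  exact hcomp.unique ((hasDerivAt_const 0 c).congr_of_eventuallyEq (hγ.eventually hc))

lemma eq_of_apply_eq_zero_of_surjective {L : Euc d →L[ℝ] Euc d} (hL : Function.Surjective L)
    {j₁ j₂ : Fin d} (h₁ : ∀ v : Euc d, v i = 0 → L v j₁ = 0)
    (h₂ : ∀ v : Euc d, v i = 0 → L v j₂ = 0) : j₁ = j₂ := by
  have hrow : ∀ j, (∀ v : Euc d, v i = 0 → L v j = 0) →
      ∀ y : Euc d, L y j = y i * L (EuclideanSpace.single i 1) j := by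
    intro j hj y
    have := hj (y - y i • EuclideanSpace.single i 1) (by simp)
    simpa [sub_eq_zero] using this
  -- with `c = L eᵢ`, preimages `y₁, y₂` of `e j₁, e j₂` give `y₁ i * c j₁ = 1`,
  -- `y₂ i * c j₁ = 0` and `y₂ i * c j₂ = 1`
  by_contra hne
  obtain ⟨y₁, hy₁⟩ := hL (EuclideanSpace.single j₁ 1)
  obtain ⟨y₂, hy₂⟩ := hL (EuclideanSpace.single j₂ 1)
  have e₁ := hrow j₁ h₁ y₁
  have e₂ := hrow j₁ h₁ y₂
  have e₃ := hrow j₂ h₂ y₂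
  simp [hy₁, hy₂, hne] at e₁ e₂ e₃
  rcases e₂ with h0 | h0 <;> simp [h0] at e₁ e₃

end SliceDerivative

namespace IsSmoothDiffeoOn

variable {d : ℕ} {h hinv : Euc d → Euc d} {S S' : Set (Euc d)} {i j : Fin d} {τ τ' : ℝ}

lemma eq_of_eventually_eq (hd : IsSmoothDiffeoOn h hinv S S') (hS : IsOpen S) (hS' : IsOpen S')
    {z : Euc d} (hz : z ∈ Gamma S i τ) {j₁ j₂ : Fin d} {c₁ c₂ : ℝ}
    (h₁ : ∀ᶠ w in 𝓝[Gamma S i τ] z, h w j₁ = c₁) (h₂ : ∀ᶠ w in 𝓝[Gamma S i τ] z, h w j₂ = c₂) :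
    j₁ = j₂ :=
  have hdiff := (hd.hasFDerivAt hS hz.1).differentiableAt
  eq_of_apply_eq_zero_of_surjective (hd.surjective_fderiv hS hS' hz.1)
    (fun _ hv => fderiv_apply_eq_zero_of_eventually_eq hS hz hdiff h₁ hv)
    (fun _ hv => fderiv_apply_eq_zero_of_eventually_eq hS hz hdiff h₂ hv)

/-- The slice is a Baire space, so the grid equations with nonempty interior hold on a dense
subset of it; each of them forces a row of `Dh` to vanish on the slice, and at most one row can. -/
lemma exists_eventually_coord_eq (hd : IsSmoothDiffeoOn h hinv S S') (hS : IsOpen S)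
    (hS' : IsOpen S') (CB : DiscreteCoordination S') (hgrid : ∀ z ∈ Gamma S i τ, h z ∈ CB.grid)
    {p : Euc d} (hp : p ∈ Gamma S i τ) :
    ∃ m : (j : Fin d) × Fin (CB.n j), ∀ᶠ z in 𝓝[Gamma S i τ] p, h z m.1 = CB.A m.1 m.2 := by
  have : BaireSpace (Gamma S i τ) :=
    (isGδ_gamma hS i τ).baireSpace_of_t2Space_locallyCompactSpace
  have hh : Continuous fun y : Gamma S i τ => h y :=
    (hd.smooth.continuousOn.mono fun _ hz => hz.1).domRestrict
  have hDh : Continuous fun y : Gamma S i τ => fderiv ℝ h y :=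
    ((hd.continuousOn_fderiv hS).mono fun _ hz => hz.1).domRestrict
  set F : ((j : Fin d) × Fin (CB.n j)) → Set (Gamma S i τ) :=
    fun m => {y | h y m.1 = CB.A m.1 m.2}
  set R : Fin d → Set (Gamma S i τ) := fun j => {y | ∀ v : Euc d, v i = 0 → fderiv ℝ h y v j = 0}
  have hF : ∀ m, IsClosed (F m) := fun m =>
    isClosed_eq ((continuous_apply m.1).comp ((PiLp.continuous_ofLp 2 _).comp hh)) continuous_const
  have hcover : ⋃ m, F m = univ := eq_univ_of_forall fun y => by
    obtain ⟨j, k, hk⟩ := mem_iUnion₂.1 (hgrid y y.2)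
    exact mem_iUnion.2 ⟨⟨j, k⟩, hk.2⟩
  have hFR : ∀ m, closure (interior (F m)) ⊆ R m.1 ∩ F m := by
    intro m
    have hR : IsClosed (R m.1) := by
      simp only [R, ofPred_forall]
      exact isClosed_iInter fun v => isClosed_iInter fun _ =>
        isClosed_eq ((continuous_apply m.1).comp ((PiLp.continuous_ofLp 2 _).comp
          (hDh.clm_apply continuous_const))) continuous_const
    refine closure_minimal (subset_inter (fun y hy v hv => ?_) interior_subset) (hR.inter (hF m))
    exact fderiv_apply_eq_zero_of_eventually_eq hS y.2 (hd.hasFDerivAt hS y.2.1).differentiableAt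
      ((eventually_nhds_subtype_iff _ _ (fun w => h w m.1 = CB.A m.1 m.2)).1
        (mem_interior_iff_mem_nhds.1 hy)) hv
  obtain ⟨m, hm⟩ := exists_mem_nhds_of_iUnion_eq_univ hF hcover (p := ⟨p, hp⟩) <| by
    rintro ⟨j, k⟩ ⟨j', k'⟩ hm hm'
    obtain ⟨hRj, hFj⟩ := hFR _ hm
    obtain ⟨hRj', hFj'⟩ := hFR _ hm'
    obtain rfl := eq_of_apply_eq_zero_of_surjective (hd.surjective_fderiv hS hS' hp.1) hRj hRj'
    exact congrArg (Sigma.mk j) ((CB.mono j).injective (hFj.symm.trans hFj'))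
  exact ⟨m, (eventually_nhds_subtype_iff _ _ (fun w => h w m.1 = CB.A m.1 m.2)).1 hm⟩

lemma exists_forall_coord_eq (hd : IsSmoothDiffeoOn h hinv S S') (hS : IsOpen S)
    (hS' : IsOpen S') (CB : DiscreteCoordination S') (hconn : IsConnected (Gamma S i τ))
    (hgrid : ∀ z ∈ Gamma S i τ, h z ∈ CB.grid) :
    ∃ (j : Fin d) (k' : Fin (CB.n j)), ∀ z ∈ Gamma S i τ, h z j = CB.A j k' := by
  obtain ⟨⟨j, k'⟩, hm⟩ := hconn.exists_forall_of_eventually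
    (fun _ hp => hd.exists_eventually_coord_eq hS hS' CB hgrid hp) <| by
      rintro z hz ⟨j, k⟩ ⟨j', k'⟩ h₁ h₂
      obtain rfl := hd.eq_of_eventually_eq hS hS' hz h₁ h₂
      exact congrArg (Sigma.mk j)
        ((CB.mono j).injective ((h₁.self_of_nhdsWithin hz).symm.trans (h₂.self_of_nhdsWithin hz)))
  exact ⟨j, k', hm⟩


lemma image_inv_diff_image (hd : IsSmoothDiffeoOn h hinv S S') {A : Set (Euc d)} (hA : A ⊆ S) :
    hinv '' (S' \ h '' A) = S \ A := by
  ext x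
  constructor
  · rintro ⟨y, ⟨hy, hyA⟩, rfl⟩
    exact ⟨hd.mapsTo_inv hy, fun hx => hyA ⟨hinv y, hx, hd.right_inv y hy⟩⟩
  · rintro ⟨hx, hxA⟩
    refine ⟨h x, ⟨hd.mapsTo hx, fun ⟨w, hw, hwx⟩ => hxA ?_⟩, hd.left_inv x hx⟩
    rwa [← hd.injOn (hA hw) hx hwx]

/-- A point of the target slice outside the image would join its two halves, so the complement
of the image would be preconnected, and so would its preimage, the complement of the slice. -/
lemma coord_iff_of_forall_coord_eq (hd : IsSmoothDiffeoOn h hinv S S') (hS : IsOpen S)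
    (hS' : IsOpen S') (hsep : IsAxisSeparator S i τ) (hsep' : IsAxisSeparator S' j τ')
    (hcoord : ∀ z ∈ Gamma S i τ, h z j = τ') : ∀ z ∈ S, z i = τ ↔ h z j = τ' := by
  refine fun z hz => ⟨fun hzi => hcoord z ⟨hz, hzi⟩, fun hzj => ?_⟩
  by_contra hzi
  set C := h '' Gamma S i τ
  set T := Gamma S' j τ' \ C
  have hCsub : C ⊆ Gamma S' j τ' := by
    rintro _ ⟨w, hw, rfl⟩
    exact ⟨hd.mapsTo hw.1, hcoord w hw⟩
  have hzT : h z ∈ T := ⟨⟨hd.mapsTo hz, hzj⟩, fun ⟨w, hw, hwz⟩ => hzi (hd.injOn hw.1 hz hwz ▸ hw.2)⟩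
  have hX : IsPreconnected (GammaPos S' j τ' ∪ T) :=
    hsep'.2.1.isPreconnected.subset_closure subset_union_left
      (union_subset subset_closure (sdiff_subset.trans (gamma_subset_closure_gammaPos hS' j τ')))
  have hY : IsPreconnected (GammaNeg S' j τ' ∪ T) :=
    hsep'.2.2.isPreconnected.subset_closure subset_union_left
      (union_subset subset_closure (sdiff_subset.trans (gamma_subset_closure_gammaNeg hS' j τ')))
  have hW : S' \ C = (GammaPos S' j τ' ∪ T) ∪ (GammaNeg S' j τ' ∪ T) := by
    ext y
    constructor
    · rintro ⟨hy, hyC⟩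
      rcases lt_trichotomy (y j) τ' with hlt | heq | hgt
      exacts [Or.inr (Or.inl ⟨hy, hlt⟩), Or.inl (Or.inr ⟨⟨hy, heq⟩, hyC⟩),
        Or.inl (Or.inl ⟨hy, hgt⟩)]
    · rintro ((hy | hy) | (hy | hy))
      exacts [⟨hy.1, fun hyC => hy.2.ne' (hCsub hyC).2⟩, ⟨hy.1.1, hy.2⟩,
        ⟨hy.1, fun hyC => hy.2.ne (hCsub hyC).2⟩, ⟨hy.1.1, hy.2⟩]
  refine not_isPreconnected_diff_gamma hS hsep ?_
  rw [← hd.image_inv_diff_image fun _ hw => hw.1, hW]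
  exact (hX.union (h z) (Or.inr hzT) (Or.inr hzT) hY).image hinv
    (hd.smooth_inv.continuousOn.mono (hW ▸ sdiff_subset))

lemma exists_coord_iff (hd : IsSmoothDiffeoOn h hinv S S') (hS : IsOpen S) (hS' : IsOpen S')
    (CB : DiscreteCoordination S') (hsep : IsAxisSeparator S i τ)
    (hgrid : ∀ z ∈ Gamma S i τ, h z ∈ CB.grid) :
    ∃ (j : Fin d) (k' : Fin (CB.n j)), ∀ z ∈ S, z i = τ ↔ h z j = CB.A j k' := by
  obtain ⟨j, k', hj⟩ := hd.exists_forall_coord_eq hS hS' CB hsep.1 hgrid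
  exact ⟨j, k', hd.coord_iff_of_forall_coord_eq hS hS' hsep (CB.sep j k') hj⟩

lemma forall_exists_coord_iff (hd : IsSmoothDiffeoOn h hinv S S') (hS : IsOpen S)
    (hS' : IsOpen S') (CA : DiscreteCoordination S) (CB : DiscreteCoordination S')
    (hgrid : ∀ z ∈ S, z ∈ CA.grid ↔ h z ∈ CB.grid) :
    (∀ i k, ∃ (j : Fin d) (k' : Fin (CB.n j)), ∀ z ∈ S, z i = CA.A i k ↔ h z j = CB.A j k') ∧
    (∀ j k', ∃ (i : Fin d) (k : Fin (CA.n i)), ∀ z ∈ S, z i = CA.A i k ↔ h z j = CB.A j k') := by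
  refine ⟨fun i k => hd.exists_coord_iff hS hS' CB (CA.sep i k) fun z hz =>
    (hgrid z hz.1).1 (mem_iUnion₂.2 ⟨i, k, hz⟩), fun j k' => ?_⟩
  obtain ⟨i, k, hM⟩ := hd.symm.exists_coord_iff hS' hS CA (CB.sep j k') fun y hy =>
    (hgrid _ (hd.mapsTo_inv hy.1)).2 (by rw [hd.right_inv y hy.1]; exact mem_iUnion₂.2 ⟨j, k', hy⟩)
  refine ⟨i, k, fun z hz => ?_⟩
  simpa [hd.left_inv z hz] using (hM (h z) (hd.mapsTo hz)).symm

lemma le_iff_or_le_iff (hd : IsSmoothDiffeoOn h hinv S S') (hsep : IsAxisSeparator S i τ)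
    (hsep' : IsAxisSeparator S' j τ') (hM : ∀ z ∈ S, z i = τ ↔ h z j = τ') :
    (∀ z ∈ S, τ ≤ z i ↔ τ' ≤ h z j) ∨ (∀ z ∈ S, τ ≤ z i ↔ h z j ≤ τ') := by
  have hpre : ∀ y ∈ S', ∃ z ∈ S, h z j = y j := fun y hy =>
    ⟨hinv y, hd.mapsTo_inv hy, by rw [hd.right_inv y hy]⟩
  obtain ⟨yn, hyn⟩ := hsep'.2.2.nonempty
  obtain ⟨yp, hyp⟩ := hsep'.2.1.nonempty
  obtain ⟨zn, hzn, hzn'⟩ := hpre yn hyn.1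
  obtain ⟨zp, hzp, hzp'⟩ := hpre yp hyp.1
  have hb : ContinuousOn (fun z => h z j) S := (continuous_apply j).comp_continuousOn
    ((PiLp.continuous_ofLp 2 _).comp_continuousOn hd.smooth.continuousOn)
  exact le_iff_le_or_le_iff_ge (a := fun z : Euc d => z i) hb hsep.2.1.isPreconnected
    hsep.2.2.isPreconnected hM ⟨zn, hzn, hzn' ▸ hyn.2⟩ ⟨zp, hzp, hzp' ▸ hyp.2⟩

lemma le_iff_or_le_iff_of_forall (hd : IsSmoothDiffeoOn h hinv S S')
    (CA : DiscreteCoordination S) (CB : DiscreteCoordination S')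
    {f : Fin (CA.n i) → Fin (CB.n j)} (hf : ∀ k, ∀ z ∈ S, z i = CA.A i k ↔ h z j = CB.A j (f k)) :
    (∀ k, ∀ z ∈ S, CA.A i k ≤ z i ↔ CB.A j (f k) ≤ h z j) ∨
    (∀ k, ∀ z ∈ S, CA.A i k ≤ z i ↔ h z j ≤ CB.A j (f k)) := by
  have horient := fun k => hd.le_iff_or_le_iff (CA.sep i k) (CB.sep j (f k)) (hf k)
  have hcons : ∀ k₁ k₂, (∀ z ∈ S, CA.A i k₁ ≤ z i ↔ CB.A j (f k₁) ≤ h z j) →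
      (∀ z ∈ S, CA.A i k₂ ≤ z i ↔ h z j ≤ CB.A j (f k₂)) → False := by
    intro k₁ k₂ h₁ h₂
    obtain ⟨z₁, hz₁⟩ := (CA.sep i k₁).1.nonempty
    obtain ⟨z₂, hz₂⟩ := (CA.sep i k₂).1.nonempty
    obtain ⟨w, hw⟩ := (CA.sep i k₁).2.2.nonempty
    exact false_of_le_iff_le_of_le_iff_ge h₁ h₂ hz₁.1 hz₁.2 ((hf k₁ z₁ hz₁.1).1 hz₁.2) hz₂.1
      hz₂.2 ((hf k₂ z₂ hz₂.1).1 hz₂.2) hw.1 hw.2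
  by_cases hpres : ∀ k, ∀ z ∈ S, CA.A i k ≤ z i ↔ CB.A j (f k) ≤ h z j
  · exact Or.inl hpres
  · obtain ⟨k₀, hk₀⟩ := not_forall.1 hpres
    exact Or.inr fun k => (horient k).resolve_left fun hk =>
      hcons k k₀ hk ((horient k₀).resolve_left hk₀)

end IsSmoothDiffeoOn

section Matching

variable {d : ℕ} {h hinv : Euc d → Euc d} {S S' : Set (Euc d)}

lemma eq_and_eq_of_coord_iff (hS : IsOpen S) {i₁ i₂ j₁ j₂ : Fin d} {τ₁ τ₂ τ₁' τ₂' : ℝ}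
    (h₁ : ∀ z ∈ S, z i₁ = τ₁ ↔ h z j₁ = τ₁') (h₂ : ∀ z ∈ S, z i₂ = τ₂ ↔ h z j₂ = τ₂')
    (hj : j₁ = j₂) {z : Euc d} (hz : z ∈ S) (hz₁ : z i₁ = τ₁) (hz₂ : z i₂ = τ₂) :
    i₁ = i₂ ∧ τ₁ = τ₂ := by
  subst hj
  refine eq_and_eq_of_forall_mem_iff hS hz hz₁ fun w hw => ?_
  rw [h₁ w hw, h₂ w hw, ← (h₁ z hz).1 hz₁, ← (h₂ z hz).1 hz₂]

lemma IsSmoothDiffeoOn.target_eq_and_eq_of_coord_iff (hd : IsSmoothDiffeoOn h hinv S S')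
    (hS' : IsOpen S') {i j₁ j₂ : Fin d} {τ τ₁' τ₂' : ℝ} (h₁ : ∀ z ∈ S, z i = τ ↔ h z j₁ = τ₁')
    (h₂ : ∀ z ∈ S, z i = τ ↔ h z j₂ = τ₂') {z : Euc d} (hz : z ∈ S) (hzi : z i = τ) :
    j₁ = j₂ ∧ τ₁' = τ₂' := by
  refine eq_and_eq_of_forall_mem_iff hS' (hd.mapsTo hz) ((h₁ z hz).1 hzi) fun y hy => ?_
  rw [← hd.right_inv y hy, ← h₁ _ (hd.mapsTo_inv hy), h₂ _ (hd.mapsTo_inv hy)]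

/-- Slices of `A` that meet cannot go to distinct parallel slices of `B`; the backbone slices meet
each other and all slices on other axes. -/
lemma exists_perm_of_hasBackbone (hS : IsOpen S) {CA : DiscreteCoordination S}
    {CB : DiscreteCoordination S'} (hbb : CA.HasBackbone)
    (hA : ∀ i k, ∃ (j : Fin d) (k' : Fin (CB.n j)), ∀ z ∈ S, z i = CA.A i k ↔ h z j = CB.A j k') :
    ∃ σ : Equiv.Perm (Fin d), ∀ i k, ∃ k' : Fin (CB.n (σ i)),
      ∀ z ∈ S, z i = CA.A i k ↔ h z (σ i) = CB.A (σ i) k' := by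
  obtain ⟨kstar, ⟨z₀, hz₀⟩, hcross⟩ := hbb
  have hz₀i : ∀ i, z₀ ∈ Gamma S i (CA.A i (kstar i)) :=
    mem_iInter.1 (hz₀.symm ▸ mem_singleton z₀ : z₀ ∈ ⋂ i, Gamma S i (CA.A i (kstar i)))
  choose J K hJK using hA
  have hinj : Function.Injective fun i => J i (kstar i) := fun i₁ i₂ he =>
    (eq_and_eq_of_coord_iff hS (hJK i₁ _) (hJK i₂ _) he (hz₀i i₁).1 (hz₀i i₁).2 (hz₀i i₂).2).1
  have hJ : ∀ i k j (k' : Fin (CB.n j)), (∀ z ∈ S, z i = CA.A i k ↔ h z j = CB.A j k') →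
      j = J i (kstar i) := by
    intro i k j k' hM
    by_contra hne
    obtain ⟨m, rfl⟩ := Finite.injective_iff_surjective.1 hinj j
    have hmi : i ≠ m := fun e => hne (e ▸ rfl)
    obtain ⟨z, hzm, hzi⟩ := hcross m i hmi k
    exact hmi (eq_and_eq_of_coord_iff hS (hJK m _) hM rfl hzm.1 hzm.2 hzi.2).1.symm
  refine ⟨Equiv.ofBijective _ (Finite.injective_iff_bijective.1 hinj), fun i k => ?_⟩
  obtain ⟨j, k', hM⟩ : ∃ (j : Fin d) (k' : Fin (CB.n j)),
      ∀ z ∈ S, z i = CA.A i k ↔ h z j = CB.A j k' := ⟨_, _, hJK i k⟩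
  obtain rfl := hJ i k j k' hM
  exact ⟨k', hM⟩

lemma IsSmoothDiffeoOn.exists_bijective (hd : IsSmoothDiffeoOn h hinv S S') (hS : IsOpen S)
    (hS' : IsOpen S') {CA : DiscreteCoordination S} {CB : DiscreteCoordination S'}
    {σ : Fin d → Fin d} (hσ : Function.Injective σ)
    (hA : ∀ i k, ∃ k' : Fin (CB.n (σ i)), ∀ z ∈ S, z i = CA.A i k ↔ h z (σ i) = CB.A (σ i) k')
    (hB : ∀ j k', ∃ (i : Fin d) (k : Fin (CA.n i)), ∀ z ∈ S, z i = CA.A i k ↔ h z j = CB.A j k')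
    (i : Fin d) : ∃ f : Fin (CA.n i) → Fin (CB.n (σ i)), Function.Bijective f ∧
      ∀ k, ∀ z ∈ S, z i = CA.A i k ↔ h z (σ i) = CB.A (σ i) (f k) := by
  choose f hf using hA
  refine ⟨f i, ⟨fun k₁ k₂ he => ?_, fun k' => ?_⟩, hf i⟩
  · obtain ⟨z, hz⟩ := (CA.sep i k₁).1.nonempty
    have h₂ := hf i k₂
    rw [← he] at h₂
    exact (CA.mono i).injective (eq_and_eq_of_coord_iff hS (hf i k₁) h₂ rfl hz.1 hz.2
      ((h₂ z hz.1).2 ((hf i k₁ z hz.1).1 hz.2))).2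
  · obtain ⟨i', k, hM⟩ := hB (σ i) k'
    obtain ⟨z, hz⟩ := (CA.sep i' k).1.nonempty
    obtain ⟨hσi, hBk⟩ := hd.target_eq_and_eq_of_coord_iff hS' hM (hf i' k) hz.1 hz.2
    obtain rfl := hσ hσi.symm
    exact ⟨k, ((CB.mono _).injective hBk).symm⟩

end Matching

lemma IsSmoothDiffeoOn.exists_sign_Q_eq_Qsgn {d : ℕ} {h hinv : Euc d → Euc d}
    {S S' : Set (Euc d)} (hd : IsSmoothDiffeoOn h hinv S S') {CA : DiscreteCoordination S}
    {CB : DiscreteCoordination S'} {i j : Fin d} {f : Fin (CA.n i) → Fin (CB.n j)}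
    (hf : Function.Bijective f) (hM : ∀ k, ∀ z ∈ S, z i = CA.A i k ↔ h z j = CB.A j (f k)) :
    ∃ s : ℤ, (s = 1 ∨ s = -1) ∧ ∀ z ∈ S, Q (z i) (CA.A i) = Qsgn s (h z j) (CB.A j) := by
  rcases hd.le_iff_or_le_iff_of_forall CA CB hM with hpres | hrev
  · exact ⟨1, Or.inl rfl, fun z hz =>
      (Q_eq_Q_of_bijective hf fun k => hpres k z hz).trans (if_pos rfl).symm⟩
  · exact ⟨-1, Or.inr rfl, fun z hz =>
      (Q_eq_Qneg_of_bijective hf fun k => hrev k z hz).trans (if_neg (by decide)).symm⟩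

theorem quantized_factors_identifiability_general
    {d : ℕ} {S S' : Set (Euc d)} (hS : IsOpen S) (hS' : IsOpen S')
    (μ : Measure (Euc d))
    (hμS : μ (Set.univ \ S) = 0)
    (CA : DiscreteCoordination S) (hbb : CA.HasBackbone)
    (hdiscA : {z | z ∈ S ∧ HasNonRemovableDiscont μ z} = CA.grid)
    {h hinv : Euc d → Euc d} (hdiff : IsSmoothDiffeoOn h hinv S S')
    (ν : Measure (Euc d)) (hν : ν = Measure.map h (μ.restrict S))
    (CB : DiscreteCoordination S')
    (hdiscB : {z' | z' ∈ S' ∧ HasNonRemovableDiscont ν z'} = CB.grid) :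
    ∃ (σ : Equiv.Perm (Fin d)) (s : Fin d → ℤ),
      (∀ i, s i = 1 ∨ s i = -1) ∧
      ∀ i : Fin d, ∀ z ∈ S, Q (z i) (CA.A i) = Qsgn (s i) (h z (σ i)) (CB.A (σ i)) := by
  have hμ : μ.restrict S = μ :=
    Measure.restrict_eq_self_of_ae_mem
      (ae_iff.2 (by rwa [← compl_eq_univ_sdiff] at hμS))
  have hgrid : ∀ z ∈ S, z ∈ CA.grid ↔ h z ∈ CB.grid := fun z hz => by
    rw [← hdiscA, ← hdiscB, hν, hμ]
    exact ⟨fun ⟨_, hdisc⟩ => ⟨hdiff.mapsTo hz,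
      (hdiff.hasNonRemovableDiscont_map_iff hS hS' hμ hz).2 hdisc⟩,
      fun ⟨_, hdisc⟩ => ⟨hz, (hdiff.hasNonRemovableDiscont_map_iff hS hS' hμ hz).1 hdisc⟩⟩
  obtain ⟨hA, hB⟩ := hdiff.forall_exists_coord_iff hS hS' CA CB hgrid
  obtain ⟨σ, hσ⟩ := exists_perm_of_hasBackbone hS hbb hA
  have hsign : ∀ i, ∃ s : ℤ, (s = 1 ∨ s = -1) ∧
      ∀ z ∈ S, Q (z i) (CA.A i) = Qsgn s (h z (σ i)) (CB.A (σ i)) := fun i => by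
    obtain ⟨f, hf, hM⟩ := hdiff.exists_bijective hS hS' σ.injective hσ hB i
    exact hdiff.exists_sign_Q_eq_Qsgn hf hM
  choose s hs hQ using hsign
  exact ⟨σ, s, hs, hQ⟩

/-- **Quantized factors identifiability theorem.** -/
theorem quantized_factors_identifiability
    {d : ℕ} {S S' : Set (Euc d)} (hS : IsOpen S) (hSc : IsConnected S) (hS' : IsOpen S')
    (μ : Measure (Euc d)) [IsProbabilityMeasure μ] (hac : μ ≪ volume)
    (hμS : μ (Set.univ \ S) = 0)
    (CA : DiscreteCoordination S) (hbb : CA.HasBackbone)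
    (hdiscA : {z | z ∈ S ∧ HasNonRemovableDiscont μ z} = CA.grid)
    {h hinv : Euc d → Euc d} (hdiff : IsSmoothDiffeoOn h hinv S S')
    (ν : Measure (Euc d)) (hν : ν = Measure.map h (μ.restrict S))
    (CB : DiscreteCoordination S')
    (hdiscB : {z' | z' ∈ S' ∧ HasNonRemovableDiscont ν z'} = CB.grid) :
    ∃ (σ : Equiv.Perm (Fin d)) (s : Fin d → ℤ),
      (∀ i, s i = 1 ∨ s i = -1) ∧
      ∀ i : Fin d, ∀ z ∈ S, Q (z i) (CA.A i) = Qsgn (s i) (h z (σ i)) (CB.A (σ i)) :=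
  quantized_factors_identifiability_general hS hS' μ hμS CA hbb hdiscA hdiff ν hν CB hdiscB
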